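/- Define P(F) for F(z₁,z₂) = (z₁φ(z₁z₂), z₂ψ(z₁z₂)) in the centralizer 𝔠 of the diagonal torus by P(F)(t) = t·φ(t)·ψ(t). Then P is a group homomorphism from 𝔠 (under composition) to the group of invertible one-variable formal power series under composition, and P(F) ∘ π = π ∘ F where π(z₁,z₂) = z₁z₂. -/

import Mathlib

noncomputable section

def compP (f g : PowerSeries ℂ) : PowerSeries ℂ :=
  PowerSeries.mk fun n =>
    ∑ j ∈ Finset.range (n + 1), PowerSeries.coeff j f * PowerSeries.coeff n (g ^ j)

def iterP (g : PowerSeries ℂ) : ℕ → PowerSeries ℂ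
  | 0 => PowerSeries.X
  | m + 1 => compP g (iterP g m)

abbrev FormalMap (n : ℕ) := Fin n → MvPowerSeries (Fin n) ℂ

def degreeOf {n : ℕ} (d : Fin n →₀ ℕ) : ℕ := d.sum fun _ m => m

def substM {n : ℕ} (G : FormalMap n) (f : MvPowerSeries (Fin n) ℂ) :
    MvPowerSeries (Fin n) ℂ :=
  fun d =>
    ∑ e ∈ Finset.Iic (Finsupp.equivFunOnFinite.symm fun _ => degreeOf d),
      MvPowerSeries.coeff e f * MvPowerSeries.coeff d (∏ i, G i ^ e i)

def compM {n : ℕ} (F G : FormalMap n) : FormalMap n := fun i => substM G (F i)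

def idM (n : ℕ) : FormalMap n := fun i => MvPowerSeries.X i

def iterM {n : ℕ} (F : FormalMap n) : ℕ → FormalMap n
  | 0 => idM n
  | m + 1 => compM F (iterM F m)

def linMatrix {n : ℕ} (F : FormalMap n) : Matrix (Fin n) (Fin n) ℂ :=
  fun i j => MvPowerSeries.coeff (Finsupp.single j 1) (F i)

def linMap {n : ℕ} (F : FormalMap n) : FormalMap n :=
  fun i => ∑ j, MvPowerSeries.C (linMatrix F i j) * MvPowerSeries.X j

def substPM (q : MvPowerSeries (Fin 2) ℂ) (φ : PowerSeries ℂ) : MvPowerSeries (Fin 2) ℂ :=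
  fun d =>
    ∑ j ∈ Finset.range (degreeOf d + 1),
      PowerSeries.coeff j φ * MvPowerSeries.coeff d (q ^ j)

def pXY : MvPowerSeries (Fin 2) ℂ := MvPowerSeries.X 0 * MvPowerSeries.X 1

def Mmap (φ ψ : PowerSeries ℂ) : FormalMap 2 :=
  ![MvPowerSeries.X 0 * substPM pXY φ, MvPowerSeries.X 1 * substPM pXY ψ]

/-!
The truncated sums defining `compP`, `substPM` and `substM` are Mathlib's substitutions of
power series without constant term: the omitted terms vanish because a product of `k` series
without constant term has order at least `k`. After this identification, `π ∘ F = P(F) ∘ π` is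
a ring computation, and `P` is a homomorphism by associativity of substitution:
`π ∘ (F ∘ G) = (π ∘ F) ∘ G = P(F) ∘ (π ∘ G) = P(F) ∘ P(G) ∘ π`.
-/

open Finset

namespace MvPowerSeries

variable {σ τ R : Type*} [CommRing R]

theorem coeff_pow_eq_zero_of_degree_lt {a : MvPowerSeries τ R} (ha : constantCoeff a = 0)
    {d : τ →₀ ℕ} {j : ℕ} (h : d.degree < j) : coeff d (a ^ j) = 0 :=
  coeff_of_lt_order <| (Nat.cast_lt.mpr h).trans_le (le_order_pow_of_constantCoeff_eq_zero j ha)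

theorem coeff_prod_pow_eq_zero_of_degree_lt {a : σ → MvPowerSeries τ R}
    (ha : ∀ s, constantCoeff (a s) = 0) {e : σ →₀ ℕ} {d : τ →₀ ℕ} (h : d.degree < e.degree) :
    coeff d (e.prod fun s k => a s ^ k) = 0 := by
  apply coeff_of_lt_order
  calc (d.degree : ℕ∞) < e.degree := Nat.cast_lt.mpr h
    _ = ∑ s ∈ e.support, (e s : ℕ∞) := by rw [Finsupp.degree_apply, Nat.cast_sum]
    _ ≤ ∑ s ∈ e.support, (a s ^ e s).order :=
      sum_le_sum fun s _ => le_order_pow_of_constantCoeff_eq_zero _ (ha s)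
    _ ≤ _ := le_order_prod _ _

theorem coeff_subst_eq_sum_Iic [Fintype σ] [DecidableEq σ] {a : σ → MvPowerSeries τ R}
    (ha : ∀ s, constantCoeff (a s) = 0) (f : MvPowerSeries σ R) (d : τ →₀ ℕ) :
    coeff d (subst a f) = ∑ e ∈ Iic (Finsupp.equivFunOnFinite.symm fun _ => d.degree),
      coeff e f * coeff d (∏ s, a s ^ e s) := by
  rw [coeff_subst (hasSubst_of_constantCoeff_zero ha), finsum_eq_finsetSum_of_support_subset]
  · refine sum_congr rfl fun e _ => ?_
    rw [smul_eq_mul, Finsupp.prod_fintype _ _ fun _ => pow_zero _]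
  · intro e he
    by_contra hle
    obtain ⟨s, hs⟩ : ∃ s, d.degree < e s := by
      simpa [Finsupp.le_def] using hle
    have hdeg : d.degree < e.degree := hs.trans_le <| by
      rw [Finsupp.degree_eq_sum]
      exact single_le_sum (by simp) (mem_univ s)
    exact he (by simp only [coeff_prod_pow_eq_zero_of_degree_lt ha hdeg, smul_zero])

end MvPowerSeries

namespace PowerSeries

theorem coeff_subst_eq_sum_range {τ R : Type*} [CommRing R] {a : MvPowerSeries τ R}
    (ha : MvPowerSeries.constantCoeff a = 0) (f : PowerSeries R) (d : τ →₀ ℕ) :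
    MvPowerSeries.coeff d (subst a f) =
      ∑ j ∈ range (d.degree + 1), coeff j f * MvPowerSeries.coeff d (a ^ j) := by
  rw [coeff_subst (HasSubst.of_constantCoeff_zero ha), finsum_eq_finsetSum_of_support_subset]
  · rfl
  · intro j hj
    by_contra hlt
    simp only [coe_range, Set.mem_Iio, not_lt, Nat.succ_le_iff] at hlt
    exact hj (by simp [MvPowerSeries.coeff_pow_eq_zero_of_degree_lt ha hlt])

end PowerSeries

theorem compP_eq_subst {f g : PowerSeries ℂ} (hg : PowerSeries.constantCoeff g = 0) :
    compP f g = f.subst g := by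
  ext n
  rw [compP, PowerSeries.coeff_mk, PowerSeries.coeff, PowerSeries.coeff_subst_eq_sum_range hg,
    Finsupp.degree_single]

theorem substPM_eq_subst {q : MvPowerSeries (Fin 2) ℂ} (hq : MvPowerSeries.constantCoeff q = 0)
    (f : PowerSeries ℂ) : substPM q f = f.subst q := by
  ext d
  rw [PowerSeries.coeff_subst_eq_sum_range hq]
  rfl

theorem substM_eq_subst {n : ℕ} {G : FormalMap n}
    (hG : ∀ i, MvPowerSeries.constantCoeff (G i) = 0) (f : MvPowerSeries (Fin n) ℂ) :
    substM G f = MvPowerSeries.subst G f := by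
  ext d
  rw [MvPowerSeries.coeff_subst_eq_sum_Iic hG]
  rfl

theorem constantCoeff_pXY : MvPowerSeries.constantCoeff pXY = 0 := by
  simp [pXY]

theorem Mmap_eq_subst (φ ψ : PowerSeries ℂ) :
    Mmap φ ψ = ![MvPowerSeries.X 0 * φ.subst pXY, MvPowerSeries.X 1 * ψ.subst pXY] := by
  rw [Mmap, substPM_eq_subst constantCoeff_pXY, substPM_eq_subst constantCoeff_pXY]

theorem constantCoeff_Mmap (φ ψ : PowerSeries ℂ) (i : Fin 2) :
    MvPowerSeries.constantCoeff (Mmap φ ψ i) = 0 := by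
  fin_cases i <;> simp [Mmap]

theorem mul_Mmap_eq_subst_pXY (φ ψ : PowerSeries ℂ) :
    Mmap φ ψ 0 * Mmap φ ψ 1 = (PowerSeries.X * φ * ψ).subst pXY := by
  have hpXY := PowerSeries.HasSubst.of_constantCoeff_zero constantCoeff_pXY
  rw [Mmap_eq_subst, PowerSeries.subst_mul hpXY, PowerSeries.subst_mul hpXY,
    PowerSeries.subst_X hpXY, pXY]
  simp only [Matrix.cons_val_zero, Matrix.cons_val_one]
  ring

theorem subst_Mmap_pXY (φ ψ : PowerSeries ℂ) :
    MvPowerSeries.subst (Mmap φ ψ) pXY = Mmap φ ψ 0 * Mmap φ ψ 1 := by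
  have hM := MvPowerSeries.hasSubst_of_constantCoeff_zero (constantCoeff_Mmap φ ψ)
  rw [pXY, MvPowerSeries.subst_mul hM, MvPowerSeries.subst_X hM, MvPowerSeries.subst_X hM]

theorem P_is_homomorphism_general (φ ψ φ' ψ' : PowerSeries ℂ) :
    substPM pXY (PowerSeries.X * φ * ψ) = (Mmap φ ψ) 0 * (Mmap φ ψ) 1 ∧
    substPM pXY (compP (PowerSeries.X * φ * ψ) (PowerSeries.X * φ' * ψ')) =
      (compM (Mmap φ ψ) (Mmap φ' ψ')) 0 * (compM (Mmap φ ψ) (Mmap φ' ψ')) 1 := by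
  open PowerSeries in
  have hpXY := HasSubst.of_constantCoeff_zero constantCoeff_pXY
  have hP' : constantCoeff (X * φ' * ψ') = 0 := by simp
  have hM' := constantCoeff_Mmap φ' ψ'
  refine ⟨by rw [substPM_eq_subst constantCoeff_pXY, mul_Mmap_eq_subst_pXY], ?_⟩
  calc substPM pXY (compP (X * φ * ψ) (X * φ' * ψ'))
      = subst pXY (subst (X * φ' * ψ') (X * φ * ψ)) := by
        rw [substPM_eq_subst constantCoeff_pXY, compP_eq_subst hP']
    _ = subst (subst pXY (X * φ' * ψ')) (X * φ * ψ) :=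
        subst_comp_subst_apply (HasSubst.of_constantCoeff_zero' hP') hpXY _
    _ = subst (MvPowerSeries.subst (Mmap φ' ψ') pXY) (X * φ * ψ) := by
        rw [subst_Mmap_pXY, mul_Mmap_eq_subst_pXY]
    _ = MvPowerSeries.subst (Mmap φ' ψ') (subst pXY (X * φ * ψ)) :=
        (MvPowerSeries.subst_comp_subst_apply hpXY.const
          (MvPowerSeries.hasSubst_of_constantCoeff_zero hM') _).symm
    _ = compM (Mmap φ ψ) (Mmap φ' ψ') 0 * compM (Mmap φ ψ) (Mmap φ' ψ') 1 := by
        rw [← mul_Mmap_eq_subst_pXY, MvPowerSeries.subst_mul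
          (MvPowerSeries.hasSubst_of_constantCoeff_zero hM'), compM, compM,
          substM_eq_subst hM', substM_eq_subst hM']

/-- For F = (z₁φ(p), z₂ψ(p)) in the centralizer 𝔠 of the diagonal torus, set
P(F)(t) = t·φ(t)·ψ(t).  Then P(F) is semi-conjugate to F via π(z₁,z₂) = z₁z₂
(P(F) ∘ π = π ∘ F, where π ∘ F = F₀·F₁), and P is a homomorphism:
P(F) ∘ P(G) is semi-conjugate to F ∘ G via π, so that P(F ∘ G) = P(F) ∘ P(G). -/
theorem P_is_homomorphism (φ ψ φ' ψ' : PowerSeries ℂ)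
    (hφ : PowerSeries.constantCoeff φ ≠ 0) (hψ : PowerSeries.constantCoeff ψ ≠ 0)
    (hφ' : PowerSeries.constantCoeff φ' ≠ 0) (hψ' : PowerSeries.constantCoeff ψ' ≠ 0) :
    substPM pXY (PowerSeries.X * φ * ψ) = (Mmap φ ψ) 0 * (Mmap φ ψ) 1 ∧
    substPM pXY (compP (PowerSeries.X * φ * ψ) (PowerSeries.X * φ' * ψ')) =
      (compM (Mmap φ ψ) (Mmap φ' ψ')) 0 * (compM (Mmap φ ψ) (Mmap φ' ψ')) 1 :=
  P_is_homomorphism_general φ ψ φ' ψ'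

end
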